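/- arXiv:0911.3722 — 3 statements merged into one kernel-verified Lean document; each statement's English description precedes it below -/
import Mathlib

section
/- Suppose a group G admits a Hausdorff, extremally disconnected, totally bounded, left-invariant topology τ. Then the topology τ_s on G generated by the base {U \ A : U ∈ τ, A ⊆ G small} is a Hausdorff, extremally disconnected, totally bounded, left-invariant topology, and the family of nowhere dense subsets of (G, τ_s) coincides with the family S of all small subsets of G. -/
/-!
Small sets form an ideal `I` of subsets of `G`, and total boundedness makes it codense: a nonempty
open set is large, hence not small. So `τ_s` is the ideal topology generated by `τ` and `I`.
If `W` is `τ_s`-open, each basic set `U \ A ⊆ W` is `τ`-dense in `U`; this gives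
`cl_s W = cl W` and `W ⊆ int (cl W)`, so `cl_s W = cl (int (cl W))` is open by extremal
disconnectedness of `τ`. Small sets are `τ_s`-closed and contain no nonempty `τ_s`-open set, so
they are nowhere dense. Conversely, if `A` is `τ_s`-nowhere dense then, by left invariance, so is
`F * A` for every finite `F`; its complement then contains a nonempty `τ_s`-open set and is large,
which is exactly what smallness of `A` requires.
-/

open scoped Pointwise Topology

/-- A subset `A` of a group `G` is *large* if `F * A = G` for some finite `F ⊆ G`. -/
def IsLarge {G : Type*} [Group G] (A : Set G) : Prop :=
  ∃ F : Finset G, (F : Set G) * A = Set.univ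

/-- A subset `A` of a group `G` is *small* if `B \ A` is large for every large `B ⊆ G`. -/
def IsSmallSet {G : Type*} [Group G] (A : Set G) : Prop :=
  ∀ B : Set G, IsLarge B → IsLarge (B \ A)

/-- A topology on a group `G` is *left-invariant* if every left translation
`x ↦ g * x` is a homeomorphism. -/
def IsLeftInvariantTop {G : Type*} [Group G] (t : TopologicalSpace G) : Prop :=
  ∀ g : G, @IsHomeomorph G G t t (fun x => g * x)

/-- A topology on a group `G` is *totally bounded* if every nonempty open set is large. -/
def IsTotallyBoundedTop {G : Type*} [Group G] (t : TopologicalSpace G) : Prop :=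
  ∀ U : Set G, IsOpen[t] U → U.Nonempty → IsLarge U


open Set Topology TopologicalSpace

section LargeSmall

variable {G : Type*} [Group G] {A B : Set G}

lemma IsLarge.mono (hA : IsLarge A) (h : A ⊆ B) : IsLarge B := by
  obtain ⟨F, hF⟩ := hA
  exact ⟨F, eq_univ_of_univ_subset (hF ▸ mul_subset_mul_left h)⟩

lemma IsLarge.nonempty (hA : IsLarge A) : A.Nonempty := by
  obtain ⟨F, hF⟩ := hA
  rw [nonempty_iff_ne_empty]
  rintro rfl
  rw [mul_empty] at hF
  exact empty_ne_univ hF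

lemma IsLarge.smul (hA : IsLarge A) (g : G) : IsLarge (g • A) := by
  classical
  obtain ⟨F, hF⟩ := hA
  refine ⟨MulOpposite.op g⁻¹ • F, ?_⟩
  rw [Finset.coe_smul_finset, op_smul_set_mul_eq_mul_smul_set, inv_smul_smul, hF]

lemma IsLarge.of_finset_mul {F : Finset G} (h : IsLarge ((F : Set G) * A)) : IsLarge A := by
  classical
  obtain ⟨F', hF'⟩ := h
  exact ⟨F' * F, by rwa [Finset.coe_mul, mul_assoc]⟩

lemma IsSmallSet.not_isLarge (hA : IsSmallSet A) : ¬ IsLarge A := fun h => by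
  simpa using (hA A h).nonempty

lemma IsSmallSet.mono (hB : IsSmallSet B) (h : A ⊆ B) : IsSmallSet A :=
  fun C hC => (hB C hC).mono (sdiff_subset_sdiff_right h)

lemma isSmallSet_empty : IsSmallSet (∅ : Set G) := fun C hC => by rwa [sdiff_empty]

lemma IsSmallSet.union (hA : IsSmallSet A) (hB : IsSmallSet B) : IsSmallSet (A ∪ B) :=
  fun C hC => by simpa only [sdiff_sdiff] using hB _ (hA C hC)

lemma IsSmallSet.smul (hA : IsSmallSet A) (g : G) : IsSmallSet (g • A) := fun B hB => by
  simpa only [smul_set_sdiff, smul_inv_smul] using (hA _ (hB.smul g⁻¹)).smul g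

lemma isSmallSet_of_forall_isLarge_compl_mul
    (h : ∀ F : Finset G, IsLarge ((F : Set G) * A)ᶜ) : IsSmallSet A := by
  rintro B ⟨F, hF⟩
  refine IsLarge.of_finset_mul (F := F) ((h F).mono (B := (F : Set G) * (B \ A)) fun x hx => ?_)
  obtain ⟨f, hf, b, hb, rfl⟩ : x ∈ (F : Set G) * B := hF ▸ mem_univ x
  exact ⟨f, hf, b, ⟨hb, fun hbA => hx ⟨f, hf, b, hbA, rfl⟩⟩, rfl⟩

variable (G) in
def smallSets : Order.Ideal (Set G) :=
  Order.IsIdeal.toIdeal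
    { IsLowerSet := fun _ _ h hA => IsSmallSet.mono hA h
      Nonempty := ⟨∅, isSmallSet_empty⟩
      Directed := fun A hA B hB => ⟨A ∪ B, IsSmallSet.union hA hB, subset_union_left,
        subset_union_right⟩ }

@[simp]
lemma mem_smallSets : A ∈ smallSets G ↔ IsSmallSet A := Iff.rfl

end LargeSmall

section IdealTopology

variable {X : Type*} [TopologicalSpace X] (I : Order.Ideal (Set X)) {A W : Set X}

abbrev idealTopology : TopologicalSpace X :=
  generateFrom {S | ∃ U A, IsOpen U ∧ A ∈ I ∧ S = U \ A}

lemma isTopologicalBasis_idealTopology :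
    @IsTopologicalBasis X (idealTopology I) {S | ∃ U A, IsOpen U ∧ A ∈ I ∧ S = U \ A} := by
  refine @IsTopologicalBasis.mk X (idealTopology I) _ ?_ ?_ rfl
  · rintro _ ⟨U₁, A₁, hU₁, hA₁, rfl⟩ _ ⟨U₂, A₂, hU₂, hA₂, rfl⟩ x hx
    refine ⟨(U₁ ∩ U₂) \ (A₁ ∪ A₂), ⟨_, _, hU₁.inter hU₂, I.sup_mem hA₁ hA₂, rfl⟩,
      ⟨⟨hx.1.1, hx.2.1⟩, fun h => h.elim hx.1.2 hx.2.2⟩, fun y hy => ?_⟩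
    exact ⟨⟨hy.1.1, fun h => hy.2 (.inl h)⟩, ⟨hy.1.2, fun h => hy.2 (.inr h)⟩⟩
  · exact sUnion_eq_univ_iff.2 fun x =>
      ⟨univ \ ⊥, ⟨univ, ⊥, isOpen_univ, I.bot_mem, rfl⟩, by simp⟩

lemma exists_sdiff_subset_of_isOpen_idealTopology {x : X}
    (hW : IsOpen[idealTopology I] W) (hx : x ∈ W) :
    ∃ U A, IsOpen U ∧ A ∈ I ∧ x ∈ U \ A ∧ U \ A ⊆ W := by
  obtain ⟨_, ⟨U, A, hU, hA, rfl⟩, hxUA, hUAW⟩ :=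
    (isTopologicalBasis_idealTopology I).exists_subset_of_mem_open (t := idealTopology I) hx hW
  exact ⟨U, A, hU, hA, hxUA, hUAW⟩

lemma idealTopology_le : idealTopology I ≤ ‹TopologicalSpace X› := fun U hU =>
  isOpen_generateFrom_of_mem ⟨U, ⊥, hU, I.bot_mem, sdiff_bot.symm⟩

lemma isClosed_idealTopology_of_mem (hA : A ∈ I) : IsClosed[idealTopology I] A :=
  @IsClosed.mk X (idealTopology I) A
    (isOpen_generateFrom_of_mem ⟨univ, A, isOpen_univ, hA, compl_eq_univ_sdiff A⟩)

lemma continuous_idealTopology {Y : Type*} [TopologicalSpace Y] {J : Order.Ideal (Set Y)}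
    {f : X → Y} (hf : Continuous f) (hfJ : ∀ A ∈ J, f ⁻¹' A ∈ I) :
    Continuous[idealTopology I, idealTopology J] f := by
  refine continuous_generateFrom_iff.2 ?_
  rintro _ ⟨U, A, hU, hA, rfl⟩
  exact isOpen_generateFrom_of_mem
    ⟨f ⁻¹' U, f ⁻¹' A, hU.preimage hf, hfJ A hA, preimage_sdiff ..⟩

variable {I}

section Codense

variable (hI : ∀ U ∈ I, IsOpen U → U = ∅)
include hI

lemma eq_empty_of_isOpen_idealTopology_of_mem (hW : IsOpen[idealTopology I] W) (hWI : W ∈ I) :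
    W = ∅ := by
  refine eq_empty_of_forall_notMem fun x hx => ?_
  obtain ⟨U, A, hU, hA, hxUA, hUAW⟩ := exists_sdiff_subset_of_isOpen_idealTopology I hW hx
  have hUI : U ∈ I := I.lower (sdiff_subset_iff.1 hUAW) (I.sup_mem hA hWI)
  exact (hI U hUI hU).subset hxUA.1

lemma Set.Nonempty.sdiff_of_isOpen_idealTopology (hne : W.Nonempty)
    (hW : IsOpen[idealTopology I] W) (hA : A ∈ I) : (W \ A).Nonempty :=
  nonempty_of_not_subset fun hWA =>
    hne.ne_empty (eq_empty_of_isOpen_idealTopology_of_mem hI hW (I.lower hWA hA))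

lemma closure_idealTopology_of_isOpen (hW : IsOpen[idealTopology I] W) :
    closure[idealTopology I] W = closure W := by
  refine (closure.mono (idealTopology_le I)).antisymm fun x hx => ?_
  refine ((isTopologicalBasis_idealTopology I).mem_closure_iff (t := idealTopology I)).2 ?_
  rintro _ ⟨U, A, hU, hA, rfl⟩ hxUA
  have hUW : (U ∩ W).Nonempty := mem_closure_iff.1 hx U hU hxUA.1
  have hUW_open : IsOpen[idealTopology I] (U ∩ W) :=
    @IsOpen.inter X (idealTopology I) U W (idealTopology_le I U hU) hW
  obtain ⟨z, ⟨hzU, hzW⟩, hzA⟩ := hUW.sdiff_of_isOpen_idealTopology hI hUW_open hA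
  exact ⟨z, ⟨hzU, hzA⟩, hzW⟩

lemma subset_interior_closure_of_isOpen_idealTopology (hW : IsOpen[idealTopology I] W) :
    W ⊆ interior (closure W) := fun x hx => by
  obtain ⟨U, A, hU, hA, hxUA, hUAW⟩ := exists_sdiff_subset_of_isOpen_idealTopology I hW hx
  have hU_sub : U ⊆ closure W := fun y hy => mem_closure_iff.2 fun O hO hyO => by
    have hOU : (O ∩ U).Nonempty := ⟨y, hyO, hy⟩
    obtain ⟨z, ⟨hzO, hzU⟩, hzA⟩ :=
      hOU.sdiff_of_isOpen_idealTopology hI (idealTopology_le I _ (hO.inter hU)) hA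
    exact ⟨z, hzO, hUAW ⟨hzU, hzA⟩⟩
  exact interior_maximal hU_sub hU hxUA.1

lemma extremallyDisconnected_idealTopology [ExtremallyDisconnected X] :
    @ExtremallyDisconnected X (idealTopology I) := by
  refine @ExtremallyDisconnected.mk X (idealTopology I) fun W hW => ?_
  rw [closure_idealTopology_of_isOpen hI hW]
  have hW_reg : closure (interior (closure W)) = closure W :=
    (closure_minimal interior_subset isClosed_closure).antisymm
      (closure_mono (subset_interior_closure_of_isOpen_idealTopology hI hW))
  exact idealTopology_le I _ (hW_reg ▸ ExtremallyDisconnected.open_closure _ isOpen_interior)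

lemma isNowhereDense_idealTopology_of_mem (hA : A ∈ I) :
    @IsNowhereDense X (idealTopology I) A := by
  refine (@IsClosed.isNowhereDense_iff X (idealTopology I) A
    (isClosed_idealTopology_of_mem I hA)).2 ?_
  exact eq_empty_of_isOpen_idealTopology_of_mem hI (@isOpen_interior X (idealTopology I) A)
    (I.lower (@interior_subset X (idealTopology I) A) hA)

end Codense

end IdealTopology

lemma IsNowhereDense.union {X : Type*} [TopologicalSpace X] {s u : Set X}
    (hs : IsNowhereDense s) (hu : IsNowhereDense u) : IsNowhereDense (s ∪ u) := by
  rw [IsNowhereDense, closure_union, interior_union_isClosed_of_interior_empty isClosed_closure hu]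
  exact hs

section TopologicalGroup

variable {G : Type*} [Group G] [t : TopologicalSpace G] {A : Set G}

lemma IsSmallSet.eq_empty_of_isOpen (hTB : IsTotallyBoundedTop t) (hA : IsSmallSet A)
    (hAo : IsOpen A) : A = ∅ :=
  not_nonempty_iff_eq_empty.1 fun hne => hA.not_isLarge (hTB A hAo hne)

lemma IsNowhereDense.isLarge_compl (hTB : IsTotallyBoundedTop t) (hA : IsNowhereDense A) :
    IsLarge Aᶜ := by
  have hne : (closure A)ᶜ.Nonempty := nonempty_compl.2 fun h => by
    rw [IsNowhereDense, h, interior_univ] at hA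
    exact univ_nonempty.ne_empty hA
  exact (hTB _ isClosed_closure.isOpen_compl hne).mono (compl_subset_compl.2 subset_closure)

lemma isTotallyBoundedTop_idealTopology_smallSets (hTB : IsTotallyBoundedTop t) :
    IsTotallyBoundedTop (idealTopology (smallSets G)) := fun W hW ⟨x, hx⟩ => by
  obtain ⟨U, A, hU, hA, hxUA, hUAW⟩ := exists_sdiff_subset_of_isOpen_idealTopology _ hW hx
  exact (mem_smallSets.1 hA U (hTB U hU ⟨x, hxUA.1⟩)).mono hUAW

variable (hLI : IsLeftInvariantTop t)
include hLI

lemma IsNowhereDense.smul_set (hA : IsNowhereDense A) (g : G) : IsNowhereDense (g • A) :=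
  (hLI g).isInducing.isNowhereDense_image hA

lemma IsNowhereDense.finset_mul (hA : IsNowhereDense A) (F : Finset G) :
    IsNowhereDense ((F : Set G) * A) := by
  classical
  induction F using Finset.induction_on with
  | empty => simp [isNowhereDense_empty]
  | insert g F _ ih =>
    rw [Finset.coe_insert, insert_eq, union_mul, singleton_mul]
    exact (hA.smul_set hLI g).union ih

lemma IsNowhereDense.isSmallSet (hTB : IsTotallyBoundedTop t) (hA : IsNowhereDense A) :
    IsSmallSet A :=
  isSmallSet_of_forall_isLarge_compl_mul fun F => (hA.finset_mul hLI F).isLarge_compl hTB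

lemma isLeftInvariantTop_idealTopology_smallSets :
    IsLeftInvariantTop (idealTopology (smallSets G)) := by
  have hcont (g : G) : Continuous[idealTopology (smallSets G), idealTopology (smallSets G)]
      (g * ·) :=
    continuous_idealTopology _ (hLI g).continuous fun A hA => by
      rw [show (g * ·) ⁻¹' A = g⁻¹ • A from preimage_smul g A]
      exact IsSmallSet.smul hA g⁻¹
  exact fun g => (@Equiv.isHomeomorph_iff G G (idealTopology (smallSets G))
    (idealTopology (smallSets G)) (Equiv.mulLeft g)).2 ⟨hcont g, hcont g⁻¹⟩

end TopologicalGroup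

/-- If a group `G` carries a Hausdorff extremally disconnected totally bounded left-invariant
topology `τ`, then the topology `τ_s` generated by the base `{U \ A : U ∈ τ, A small}` is a
Hausdorff extremally disconnected totally bounded left-invariant topology whose nowhere dense
sets are exactly the small subsets of `G`. -/
theorem generated_topology_hausdorff_extremallyDisconnected_nowhereDense_eq_small
    {G : Type*} [Group G] (t : TopologicalSpace G)
    (hT2 : @T2Space G t) (hED : @ExtremallyDisconnected G t)
    (hTB : IsTotallyBoundedTop t) (hLI : IsLeftInvariantTop t) :
    ∀ ts : TopologicalSpace G,
      ts = TopologicalSpace.generateFrom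
        {S : Set G | ∃ U A : Set G, IsOpen[t] U ∧ IsSmallSet A ∧ S = U \ A} →
      @T2Space G ts ∧ @ExtremallyDisconnected G ts ∧
      IsTotallyBoundedTop ts ∧ IsLeftInvariantTop ts ∧
      {A : Set G | @interior G ts (@closure G ts A) = ∅} = {A : Set G | IsSmallSet A} := by
  intro ts hts
  obtain rfl : ts = @idealTopology G t (smallSets G) := hts
  have hI : ∀ U ∈ smallSets G, IsOpen[t] U → U = ∅ := fun U hU =>
    (mem_smallSets.1 hU).eq_empty_of_isOpen hTB
  have hTBs := isTotallyBoundedTop_idealTopology_smallSets hTB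
  have hLIs := isLeftInvariantTop_idealTopology_smallSets hLI
  refine ⟨t2Space_antitone (idealTopology_le _) hT2,
    @extremallyDisconnected_idealTopology G t _ hI hED, hTBs, hLIs, ?_⟩
  ext A
  exact ⟨IsNowhereDense.isSmallSet (t := idealTopology _) hLIs hTBs,
    isNowhereDense_idealTopology_of_mem hI⟩
end

section
/- For any invariant ideal I on a group G, the S-completion S_I is an S-complete ideal; that is, every subset of G that is S_I-small is already I-small. -/
open scoped Pointwise Topology

/-- A translation-invariant ideal on a group `G`: a proper family of subsets of `G`
containing the empty set, closed under subsets, finite unions and left translations. -/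
structure IsInvariantIdeal (G : Type*) [Group G] (I : Set (Set G)) : Prop where
  proper : I ≠ Set.univ
  empty_mem : ∅ ∈ I
  subset_mem : ∀ ⦃A B : Set G⦄, A ∈ I → B ⊆ A → B ∈ I
  union_mem : ∀ ⦃A B : Set G⦄, A ∈ I → B ∈ I → A ∪ B ∈ I
  translate_mem : ∀ (x : G) ⦃A : Set G⦄, A ∈ I → (fun a => x * a) '' A ∈ I

/-- A subset `A ⊆ G` is `I`-large if `G \ FA ∈ I` for some finite `F ⊆ G`. -/
def IsILarge {G : Type*} [Group G] (I : Set (Set G)) (A : Set G) : Prop :=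
  ∃ F : Finset G, (Set.univ : Set G) \ ((F : Set G) * A) ∈ I

/-- A subset `A ⊆ G` is `I`-small if `L \ A` is `I`-large for every `I`-large `L ⊆ G`. -/
def IsISmall {G : Type*} [Group G] (I : Set (Set G)) (A : Set G) : Prop :=
  ∀ L : Set G, IsILarge I L → IsILarge I (L \ A)

/-!
A set is `S_I`-large exactly when it is `I`-large. Indeed every member of `I` is `I`-small, so
`I`-large sets are `S_I`-large; conversely, if `G \ FA` is `I`-small then removing it from `G`
leaves the `I`-large set `FA`, and `F'FA` has complement in `I` for some finite `F'`.
Smallness is defined in terms of largeness alone, so `S_I`-small and `I`-small sets coincide.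
-/

section SCompletion

variable {G : Type*} [Group G] {I : Set (Set G)}

def sCompletion (I : Set (Set G)) : Set (Set G) := {A | IsISmall I A}

namespace IsInvariantIdeal

theorem univ_notMem (hI : IsInvariantIdeal G I) : Set.univ ∉ I := fun h =>
  hI.proper (Set.eq_univ_of_forall fun _ => hI.subset_mem h (Set.subset_univ _))

theorem image_mul_left_mem (hI : IsInvariantIdeal G I) (x : G) {A : Set G} (hA : A ∈ I) :
    {x} * A ∈ I := by
  rw [Set.singleton_mul]
  exact hI.translate_mem x hA

theorem finset_mul_mem (hI : IsInvariantIdeal G I) {N : Set G} (hN : N ∈ I) (F : Finset G) :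
    (F : Set G) * N ∈ I := by
  classical
  induction F using Finset.induction_on with
  | empty => simpa using hI.empty_mem
  | insert a F _ ih =>
    rw [Finset.coe_insert, Set.insert_eq, Set.union_mul]
    exact hI.union_mem (hI.image_mul_left_mem a hN) ih

end IsInvariantIdeal

theorem IsILarge.mono (hI : IsInvariantIdeal G I) {A B : Set G} (hA : IsILarge I A)
    (hAB : A ⊆ B) : IsILarge I B := by
  obtain ⟨F, hF⟩ := hA
  exact ⟨F, hI.subset_mem hF (Set.sdiff_subset_sdiff_right (Set.mul_subset_mul_left hAB))⟩

theorem isILarge_univ (hI : IsInvariantIdeal G I) : IsILarge I (Set.univ : Set G) :=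
  ⟨{1}, by simpa using hI.empty_mem⟩

theorem not_isILarge_empty (hI : IsInvariantIdeal G I) : ¬ IsILarge I (∅ : Set G) := by
  rintro ⟨F, hF⟩
  rw [Set.mul_empty, Set.sdiff_empty] at hF
  exact hI.univ_notMem hF

theorem IsILarge.image_mul_left (x : G) {A : Set G}
    (hA : IsILarge I A) : IsILarge I ((fun a => x * a) '' A) := by
  classical
  obtain ⟨F, hF⟩ := hA
  refine ⟨F * {x⁻¹}, ?_⟩
  rwa [← Set.singleton_mul, Finset.coe_mul, Finset.coe_singleton, mul_assoc,
    ← mul_assoc {x⁻¹}, Set.singleton_mul_singleton, inv_mul_cancel, Set.singleton_one, one_mul]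

theorem isISmall_of_mem (hI : IsInvariantIdeal G I) {N : Set G} (hN : N ∈ I) :
    IsISmall I N := by
  rintro L ⟨F, hF⟩
  have hFL : (F : Set G) * L ⊆ F * (L \ N) ∪ F * N := by
    rw [← Set.mul_union]
    exact Set.mul_subset_mul_left (Set.subset_sdiff_union L N)
  refine ⟨F, hI.subset_mem (hI.union_mem hF (hI.finset_mul_mem hN F)) ?_⟩
  intro g ⟨_, hg⟩
  by_cases hgFL : g ∈ (F : Set G) * L
  · exact Or.inr ((hFL hgFL).resolve_left hg)
  · exact Or.inl ⟨trivial, hgFL⟩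

theorem IsISmall.image_mul_left (x : G) {A : Set G}
    (hA : IsISmall I A) : IsISmall I ((fun a => x * a) '' A) := by
  intro L hL
  have hxL : (fun a => x * a) '' ((fun a => x⁻¹ * a) '' L) = L := by
    rw [Set.image_image]; simp
  have := (hA _ (hL.image_mul_left x⁻¹)).image_mul_left x
  rwa [Set.image_sdiff (mul_right_injective x), hxL] at this

theorem isInvariantIdeal_sCompletion (hI : IsInvariantIdeal G I) :
    IsInvariantIdeal G (sCompletion I) where
  proper h := by
    have huniv : Set.univ ∈ sCompletion I := h ▸ Set.mem_univ _
    have := huniv _ (isILarge_univ hI)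
    rw [Set.sdiff_self] at this
    exact not_isILarge_empty hI this
  empty_mem L hL := by simpa using hL
  subset_mem _ _ hA hBA L hL := (hA L hL).mono hI (Set.sdiff_subset_sdiff_right hBA)
  union_mem A _ hA hB L hL := by
    simpa only [Set.sdiff_sdiff] using hB (L \ A) (hA L hL)
  translate_mem x _ hA := hA.image_mul_left x

theorem isILarge_sCompletion_iff (hI : IsInvariantIdeal G I) {A : Set G} :
    IsILarge (sCompletion I) A ↔ IsILarge I A := by
  classical
  constructor
  · rintro ⟨F, hF⟩
    obtain ⟨F', hF'⟩ : IsILarge I ((F : Set G) * A) := by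
      simpa using hF Set.univ (isILarge_univ hI)
    exact ⟨F' * F, by rwa [Finset.coe_mul, mul_assoc]⟩
  · rintro ⟨F, hF⟩
    exact ⟨F, isISmall_of_mem hI hF⟩

theorem isISmall_congr {J : Set (Set G)} (h : ∀ A, IsILarge I A ↔ IsILarge J A) (A : Set G) :
    IsISmall I A ↔ IsISmall J A := by
  simp only [IsISmall, h]

end SCompletion

/-- The `S`-completion `S_I = {A : A is I-small}` of an invariant ideal `I` is an
`S`-complete invariant ideal: every `S_I`-small subset of `G` is already `I`-small. -/
theorem sCompletion_is_sComplete {G : Type*} [Group G] (I : Set (Set G))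
    (hI : IsInvariantIdeal G I) :
    IsInvariantIdeal G {A : Set G | IsISmall I A} ∧
    {A : Set G | IsISmall {B : Set G | IsISmall I B} A} = {A : Set G | IsISmall I A} :=
  ⟨isInvariantIdeal_sCompletion hI,
    Set.ext (isISmall_congr fun _ => isILarge_sCompletion_iff hI)⟩
end

section
/- In an amenable group G, every absolute null set is small: if A ⊆ G satisfies μ(A) = 0 for every Banach measure μ on G, then A is small (that is, N ⊆ S). -/
open scoped Pointwise Topology

/-- A *Banach measure* on a group `G`: a finitely additive, left-invariant probability
"measure" defined on all subsets of `G`, with values in `[0,1]`. -/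
structure BanachMeasure (G : Type*) [Group G] where
  toFun : Set G → ℝ
  nonneg : ∀ A : Set G, 0 ≤ toFun A
  le_one : ∀ A : Set G, toFun A ≤ 1
  additive : ∀ A B : Set G, Disjoint A B → toFun (A ∪ B) = toFun A + toFun B
  measure_univ : toFun Set.univ = 1
  invariant : ∀ (x : G) (A : Set G), toFun ((fun a => x * a) '' A) = toFun A

/-- The Følner condition: for every finite `F ⊆ G` and `ε > 0` there is a nonempty finite
`E ⊆ G` with `|E △ xE| < ε·|E|` for all `x ∈ F`.  A group is *amenable* iff it satisfies it. -/
def FolnerCond (G : Type*) [Group G] : Prop :=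
  ∀ (F : Finset G) (ε : ℝ), 0 < ε → ∃ E : Finset G, E.Nonempty ∧
    ∀ x ∈ F, ((symmDiff (E : Set G) ((fun a => x * a) '' (E : Set G))).ncard : ℝ) < ε * E.card

/-!
If `B` is large but `B \ A` is not, then the complement of `B \ A` contains a right translate
`E y` of every finite set `E`. Right translations commute with the left action, so moving the
sets of a Følner family into that complement by right translations gives again a Følner family,
and the limit of its densities along an ultrafilter is a Banach measure `μ` with
`μ (B \ A) = 0`. A large set has positive measure for every Banach measure, so
`0 < μ B ≤ μ (B \ A) + μ A = μ A`, and `A` is not absolutely null.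
-/

open MeasureTheory Filter Set MulOpposite
open scoped ENNReal symmDiff

namespace BanachMeasure

variable {G : Type*} [Group G] (μ : BanachMeasure G)

lemma toFun_mono {A B : Set G} (h : A ⊆ B) : μ.toFun A ≤ μ.toFun B := by
  have := μ.additive A (B \ A) disjoint_sdiff_self_right
  rw [union_sdiff_cancel h] at this
  linarith [μ.nonneg (B \ A)]

lemma toFun_union_le (A B : Set G) : μ.toFun (A ∪ B) ≤ μ.toFun A + μ.toFun B := by
  have := μ.additive A (B \ A) disjoint_sdiff_self_right
  rw [union_sdiff_self] at this
  linarith [μ.toFun_mono (sdiff_subset : B \ A ⊆ B)]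

lemma toFun_empty : μ.toFun ∅ = 0 := by
  have := μ.additive ∅ ∅ (disjoint_empty _)
  rw [union_empty] at this
  linarith

lemma toFun_finset_mul_le (F : Finset G) (A : Set G) :
    μ.toFun (F * A) ≤ F.card * μ.toFun A := by
  classical
  induction F using Finset.induction_on with
  | empty => simp [μ.toFun_empty]
  | insert a F ha ih =>
    rw [Finset.coe_insert, insert_eq, union_mul, singleton_mul, Finset.card_insert_of_notMem ha]
    calc _ ≤ μ.toFun ((a * ·) '' A) + μ.toFun (F * A) := μ.toFun_union_le _ _
      _ ≤ μ.toFun A + F.card * μ.toFun A := by rw [μ.invariant]; linarith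
      _ = _ := by push_cast; ring

lemma toFun_pos_of_isLarge {A : Set G} (hA : IsLarge A) : 0 < μ.toFun A := by
  obtain ⟨F, hF⟩ := hA
  have h := μ.toFun_finset_mul_le F A
  rw [hF, μ.measure_univ] at h
  exact pos_of_mul_pos_right (one_pos.trans_le h) (Nat.cast_nonneg _)

noncomputable def ofENNReal (m : Set G → ℝ≥0∞) (h_univ : m univ = 1)
    (h_add : ∀ A B, Disjoint A B → m (A ∪ B) = m A + m B)
    (h_smul : ∀ (x : G) A, m (x • A) = m A) : BanachMeasure G :=
  have h_le_one (A : Set G) : m A ≤ 1 := by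
    rw [← h_univ, ← union_compl_self A, h_add A Aᶜ disjoint_compl_right]
    exact le_self_add
  have h_ne_top (A : Set G) : m A ≠ ∞ := ne_top_of_le_ne_top ENNReal.one_ne_top (h_le_one A)
  { toFun A := (m A).toReal
    nonneg _ := ENNReal.toReal_nonneg
    le_one A := ENNReal.toReal_le_of_le_ofReal zero_le_one (by simpa using h_le_one A)
    additive A B h := by rw [h_add A B h, ENNReal.toReal_add (h_ne_top A) (h_ne_top B)]
    measure_univ := by rw [h_univ, ENNReal.toReal_one]
    invariant x A := congrArg ENNReal.toReal (h_smul x A) }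

end BanachMeasure

namespace IsFoelner

variable {G X ι : Type*} [Group G] [MulAction G X] [MeasurableSpace X] {μ : Measure X}
  {l : Filter ι} {F : ι → Set X}

lemma mean_eq_zero_of_eventually_disjoint {u : Ultrafilter ι} (hfoel : IsFoelner G μ u F)
    {C : Set X} (hC : ∀ᶠ i in u, Disjoint C (F i)) : mean μ u F C = 0 :=
  tendsto_nhds_unique_of_eventuallyEq (hfoel.tendsto_nhds_mean C) tendsto_const_nhds <|
    hC.mono fun i hi => by simp [hi.inter_eq]

lemma smul {H : Type*} [Group H] [MulAction H X] [SMulCommClass G H X] [MeasurableConstSMul H X]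
    [SMulInvariantMeasure H X μ] (hfoel : IsFoelner G μ l F) (h : ι → H) :
    IsFoelner G μ l (fun i => h i • F i) where
  eventually_measurableSet := hfoel.eventually_measurableSet.mono fun i hi => hi.const_smul (h i)
  eventually_meas_ne_zero := hfoel.eventually_meas_ne_zero.mono fun i hi => by rwa [measure_smul]
  eventually_meas_ne_top := hfoel.eventually_meas_ne_top.mono fun i hi => by rwa [measure_smul]
  tendsto_meas_smul_symmDiff g := by
    simpa only [smul_comm g, ← smul_set_symmDiff, measure_smul] using
      hfoel.tendsto_meas_smul_symmDiff g

end IsFoelner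

theorem exists_banachMeasure_toFun_eq_zero {G ι : Type*} [Group G] [MeasurableSpace G]
    [DiscreteMeasurableSpace G] {ν : Measure G} [SMulInvariantMeasure G G ν] {l : Filter ι}
    [l.NeBot] {F : ι → Set G} (hfoel : IsFoelner G ν l F) {C : Set G}
    (hC : ∀ᶠ i in l, Disjoint C (F i)) : ∃ μ : BanachMeasure G, μ.toFun C = 0 := by
  have hu := hfoel.mono (Ultrafilter.of_le l)
  refine ⟨.ofENNReal (IsFoelner.mean ν (.of l) F) hu.mean_univ_eq_one
    (fun A B => hu.mean_union_eq_add_of_disjoint A B .of_discrete) hu.mean_smul_eq_mean, ?_⟩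
  simp [BanachMeasure.ofENNReal,
    hu.mean_eq_zero_of_eventually_disjoint (hC.filter_mono (Ultrafilter.of_le l))]

theorem exists_disjoint_op_smul_of_not_isLarge {G : Type*} [Group G] {C : Set G}
    (hC : ¬ IsLarge C) (K : Finset G) : ∃ y : G, Disjoint C (op y • (K : Set G)) := by
  classical
  obtain ⟨y, hy⟩ : ∃ y, y ∉ ((K⁻¹ : Finset G) : Set G) * C := by
    by_contra! h
    exact hC ⟨K⁻¹, eq_univ_of_forall h⟩
  refine ⟨y, disjoint_left.2 fun c hc hcK => hy ?_⟩
  obtain ⟨k, hk, rfl⟩ := hcK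
  exact ⟨k⁻¹, by simpa using hk, _, hc, by simp⟩

theorem isFoelner_count_of_tendsto {G X ι : Type*} [Group G] [MulAction G X] [MeasurableSpace X]
    [DiscreteMeasurableSpace X] {l : Filter ι} {E : ι → Finset X} (hE : ∀ i, (E i).Nonempty)
    (h : ∀ g : G,
      Tendsto (fun i => (((g • (E i : Set X)) ∆ E i).ncard : ℝ) / (E i).card) l (𝓝 0)) :
    IsFoelner G Measure.count l (fun i => (E i : Set X)) where
  eventually_measurableSet := .of_forall fun _ => .of_discrete
  eventually_meas_ne_zero := .of_forall fun i => by simp [(hE i).ne_empty]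
  eventually_meas_ne_top := .of_forall fun i => by simp
  tendsto_meas_smul_symmDiff g := by
    have hfin i : ((g • (E i : Set X)) ∆ E i).Finite :=
      (E i).finite_toSet.smul_set.symmDiff (E i).finite_toSet
    refine (ENNReal.tendsto_toReal_iff (fun i => ?_) ENNReal.zero_ne_top).1 ?_
    · exact ENNReal.div_ne_top (by simp [Measure.count_apply_eq_top, hfin i])
        (by simp [(hE i).ne_empty])
    · rw [ENNReal.toReal_zero]
      refine (h g).congr fun i => ?_
      rw [ENNReal.toReal_div, Measure.count_apply_finset, Measure.count_apply_finite _ (hfin i),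
        ENNReal.toReal_natCast, ENNReal.toReal_natCast, ncard_eq_toFinset_card _ (hfin i)]

theorem FolnerCond.exists_isFoelner_count {G : Type*} [Group G] [MeasurableSpace G]
    [DiscreteMeasurableSpace G] (hG : FolnerCond G) :
    ∃ E : Finset G × ℕ → Finset G,
      IsFoelner G Measure.count atTop (fun i => (E i : Set G)) := by
  choose E hne hE using fun i : Finset G × ℕ => hG i.1 (1 / (i.2 + 1)) (by positivity)
  refine ⟨E, isFoelner_count_of_tendsto hne fun g => ?_⟩
  have hsnd : Tendsto (Prod.snd : Finset G × ℕ → ℕ) atTop atTop :=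
    prod_atTop_atTop_eq (α := Finset G) (β := ℕ) ▸ tendsto_snd
  refine squeeze_zero' (.of_forall fun i => by positivity) ?_
    (tendsto_one_div_add_atTop_nhds_zero_nat.comp hsnd)
  filter_upwards [eventually_ge_atTop ({g}, 0)] with i hi
  rw [div_le_iff₀ (by exact_mod_cast (hne i).card_pos), symmDiff_comm]
  exact (hE i g (hi.1 (Finset.mem_singleton_self g))).le

/-- In an amenable group every absolute null set is small: if `μ(A) = 0` for every Banach
measure `μ` on `G`, then `A` is small. -/
theorem absolute_null_is_small {G : Type*} [Group G] (hG : FolnerCond G) (A : Set G)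
    (hA : ∀ μ : BanachMeasure G, μ.toFun A = 0) : IsSmallSet A := by
  classical
  intro B hB
  by_contra hBA
  let : MeasurableSpace G := ⊤
  obtain ⟨E, hE⟩ := hG.exists_isFoelner_count
  choose y hy using fun i => exists_disjoint_op_smul_of_not_isLarge hBA (E i)
  obtain ⟨μ, hμ⟩ :=
    exists_banachMeasure_toFun_eq_zero (hE.smul fun i => op (y i)) (.of_forall hy)
  have hB_le : μ.toFun B ≤ μ.toFun (B \ A) + μ.toFun A :=
    (μ.toFun_mono (subset_sdiff_union B A)).trans (μ.toFun_union_le _ _)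
  linarith [μ.toFun_pos_of_isLarge hB, hA μ]
end
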